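/- arXiv:2305.15493 — 3 statements merged into one kernel-verified Lean document; each statement's English description precedes it below -/
import Mathlib

section
/- Let p be a prime, k a positive integer, and f ∈ ℤ[X] a polynomial of degree k with nonzero discriminant and content coprime to p. Then for every j ≥ 1, the number of roots of f modulo p^j satisfies ρ_f(p^j) ≤ k · min(p^{j(1-1/k)}, p^{j-1}). -/
/-!
Put `e = ⌈j / k⌉ - 1`. Among the roots of `f` modulo `p ^ j` at most `k` are pairwise
incongruent modulo `p ^ (e + 1)`. Otherwise Lagrange interpolation over `ℚ_[p]` at `k + 1` of
them, `n_0, …, n_k`, writes a coefficient of `f` that is a `p`-adic unit (the content is prime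
to `p`) as `∑ f(n_i) · coeff(L_i)`, where `L_i` has denominator `∏_{l ≠ i} (n_i - n_l)` and
integral numerator. The ultrametric inequality then gives `p ^ j ∣ ∏_{l ≠ i} (n_i - n_l)` for
some `i`, although each of the `k` factors has valuation at most `e` and `k e < j`.
Since each class modulo `p ^ (e + 1)` splits into `p ^ (j - e - 1)` classes modulo `p ^ j`,
`ρ_f(p ^ j) ≤ k p ^ (j - ⌈j / k⌉)`, which is below both bounds.
-/

open Polynomial

/-- Number of roots of `f` modulo `m`. -/
def rho (f : Polynomial ℤ) (m : ℕ) : ℕ :=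
  ((Finset.range m).filter (fun n : ℕ => (m : ℤ) ∣ f.eval (n : ℤ))).card

/-- The discriminant of an integer polynomial, computed via its complex roots:
`Δ_f = lc^(2k-2) ∏_{i<j} (α_i - α_j)^2 = (-1)^{k(k-1)/2} lc^(2k-2) ∏_{i≠j} (α_i - α_j)`. -/
noncomputable def disc (f : Polynomial ℤ) : ℂ :=
  (-1) ^ (f.natDegree * (f.natDegree - 1) / 2) *
    (f.leadingCoeff : ℂ) ^ (2 * f.natDegree - 2) *
      ∏ p ∈ (Finset.univ :
          Finset (Fin ((f.map (Int.castRingHom ℂ)).roots.toList.length))).offDiag,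
        ((f.map (Int.castRingHom ℂ)).roots.toList.get p.1 -
          (f.map (Int.castRingHom ℂ)).roots.toList.get p.2)

open Finset

theorem le_card_mul_of_pow_dvd_prod {α β : Type*} [CommMonoidWithZero α] [IsCancelMulZero α]
    {p : α} (hp : Prime p) {s : Finset β} {g : β → α} {e j : ℕ}
    (hg : ∀ x ∈ s, ¬ p ^ (e + 1) ∣ g x) (hdvd : p ^ j ∣ ∏ x ∈ s, g x) : j ≤ #s * e := by
  have hle : ∑ x ∈ s, emultiplicity p (g x) ≤ ∑ _x ∈ s, (e : ℕ∞) :=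
    sum_le_sum fun x hx ↦ Order.le_of_lt_add_one <| by
      exact_mod_cast emultiplicity_lt_iff_not_dvd.mpr (hg x hx)
  have := (pow_dvd_iff_le_emultiplicity.mp hdvd).trans
    ((Finset.emultiplicity_prod hp s g).trans_le hle)
  rw [sum_const, nsmul_eq_mul] at this
  exact_mod_cast this

theorem Lagrange.map_nodal {R S ι : Type*} [CommRing R] [CommRing S] (φ : R →+* S)
    (s : Finset ι) (v : ι → R) : (Lagrange.nodal s v).map φ = Lagrange.nodal s (φ ∘ v) := by
  simp [Lagrange.nodal_eq, Polynomial.map_prod]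

theorem exists_coeff_not_dvd_of_gcd_content_eq_one {p : ℕ} (hp : p.Prime) {f : ℤ[X]}
    (hcont : Int.gcd f.content p = 1) : ∃ m, ¬ (p : ℤ) ∣ f.coeff m := by
  by_contra! h
  have hdvd : (p : ℤ) ∣ f.content := dvd_content_iff_C_dvd.mpr ((C_dvd_iff_dvd_coeff _ _).mpr h)
  exact (Nat.prime_iff_prime_int.mp hp).not_isUnit
    ((Int.isCoprime_iff_gcd_eq_one.mpr hcont).isUnit_of_dvd' hdvd dvd_rfl)

section Padic

variable {p : ℕ} [Fact p.Prime]

theorem Padic.norm_coeff_basis_intCast_le {ι : Type*} [DecidableEq ι] {s : Finset ι}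
    {n : ι → ℤ} {i : ι} (hi : i ∈ s) (m : ℕ) :
    ‖(Lagrange.basis s (fun i ↦ (n i : ℚ_[p])) i).coeff m‖ ≤
      ‖((∏ l ∈ s.erase i, (n i - n l) : ℤ) : ℚ_[p])‖⁻¹ := by
  rw [Lagrange.basis_eq_prod_sub_inv_mul_nodal_div hi, ← Lagrange.nodal_erase_eq_nodal_div hi,
    Lagrange.nodalWeight_eq_eval_nodal_erase_inv, coeff_C_mul, norm_mul, Lagrange.eval_nodal,
    norm_inv]
  have hnodal : Lagrange.nodal (s.erase i) (fun i ↦ (n i : ℚ_[p])) =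
      (Lagrange.nodal (s.erase i) n).map (Int.castRingHom ℚ_[p]) := by
    rw [Lagrange.map_nodal]; rfl
  rw [hnodal, coeff_map]
  push_cast
  exact mul_le_of_le_one_right (by positivity) (Padic.norm_int_le_one _)

theorem exists_pow_dvd_prod_sub_of_pow_dvd_eval {ι : Type*} [DecidableEq ι] {s : Finset ι}
    {n : ι → ℤ} (hn : Set.InjOn n s) {f : ℤ[X]} (hdeg : f.natDegree < #s) {m j : ℕ}
    (hm : ¬ (p : ℤ) ∣ f.coeff m) (hroot : ∀ i ∈ s, (p : ℤ) ^ j ∣ f.eval (n i)) :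
    ∃ i ∈ s, (p : ℤ) ^ j ∣ ∏ l ∈ s.erase i, (n i - n l) := by
  set v : ι → ℚ_[p] := fun i ↦ (n i : ℚ_[p])
  set F := f.map (Int.castRingHom ℚ_[p])
  have hv : Set.InjOn v s := fun i hi l hl h ↦ hn hi hl (Int.cast_injective h)
  have hdegF : F.degree < #s :=
    degree_map_le.trans_lt (degree_le_natDegree.trans_lt (by exact_mod_cast hdeg))
  have hcoeff : F.coeff m = ∑ i ∈ s, F.eval (v i) * (Lagrange.basis s v i).coeff m := by
    conv_lhs => rw [Lagrange.eq_interpolate hv hdegF]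
    simp [Lagrange.interpolate_apply, coeff_C_mul]
  obtain ⟨i, hi, hle⟩ := IsUltrametricDist.exists_norm_finsetSum_le_of_nonempty
    (s.card_pos.mp (hdeg.trans_le' (Nat.zero_le _)))
    (fun i ↦ F.eval (v i) * (Lagrange.basis s v i).coeff m)
  refine ⟨i, hi, (Padic.norm_int_le_pow_iff_dvd _ _).mp ?_⟩
  set d : ℤ := ∏ l ∈ s.erase i, (n i - n l)
  have hd : 0 < ‖(d : ℚ_[p])‖ := norm_pos_iff.mpr <| Int.cast_ne_zero.mpr <|
    prod_ne_zero_iff.mpr fun l hl ↦ sub_ne_zero.mpr <|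
      hn.ne hi (mem_of_mem_erase hl) (ne_of_mem_erase hl).symm
  have hunit : 1 ≤ ‖F.coeff m‖ := by
    rw [coeff_map]
    exact not_lt.mp (mt Padic.norm_intCast_lt_one_iff.mp hm)
  have heval : ‖F.eval (v i)‖ ≤ (p : ℝ) ^ (-(j : ℤ)) := by
    rw [eval_intCast_map]
    exact (Padic.norm_int_le_pow_iff_dvd _ _).mpr (hroot i hi)
  have hbound : 1 ≤ ‖F.eval (v i)‖ * ‖(d : ℚ_[p])‖⁻¹ := calc
    1 ≤ ‖F.coeff m‖ := hunit
    _ ≤ ‖F.eval (v i)‖ * ‖(Lagrange.basis s v i).coeff m‖ := by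
      rw [hcoeff, ← norm_mul]; exact hle
    _ ≤ ‖F.eval (v i)‖ * ‖(d : ℚ_[p])‖⁻¹ :=
      mul_le_mul_of_nonneg_left (Padic.norm_coeff_basis_intCast_le hi m) (norm_nonneg _)
  rw [le_mul_inv_iff₀ hd, one_mul] at hbound
  exact hbound.trans heval

theorem card_le_natDegree_of_pairwise_not_dvd_sub {ι : Type*} {s : Finset ι} {n : ι → ℤ}
    {f : ℤ[X]} (hcont : Int.gcd f.content p = 1) {e j : ℕ} (hej : f.natDegree * e < j)
    (hroot : ∀ i ∈ s, (p : ℤ) ^ j ∣ f.eval (n i))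
    (hincong : (s : Set ι).Pairwise fun a b ↦ ¬ (p : ℤ) ^ (e + 1) ∣ n a - n b) :
    #s ≤ f.natDegree := by
  classical
  by_contra! hcard
  obtain ⟨t, hts, ht⟩ := exists_subset_card_eq (Nat.succ_le_of_lt hcard)
  have hinj : Set.InjOn n t := fun a ha b hb hab ↦ by
    by_contra hne
    exact hincong (hts ha) (hts hb) hne (by simp [hab])
  obtain ⟨m, hm⟩ := exists_coeff_not_dvd_of_gcd_content_eq_one Fact.out hcont
  obtain ⟨i, hi, hdvd⟩ := exists_pow_dvd_prod_sub_of_pow_dvd_eval hinj (by omega) hm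
    fun i hi ↦ hroot i (hts hi)
  have hle := le_card_mul_of_pow_dvd_prod (Nat.prime_iff_prime_int.mp Fact.out)
    (fun l hl ↦ hincong (hts hi) (hts (mem_of_mem_erase hl)) (ne_of_mem_erase hl).symm) hdvd
  rw [card_erase_of_mem hi, ht, Nat.succ_sub_one] at hle
  omega

theorem card_le_mul_card_image_mod (a b : ℕ) {S : Finset ℕ} (hS : S ⊆ range (a * b)) :
    #S ≤ a * #(S.image (· % b)) := by
  refine card_le_mul_card_image S a fun r _ ↦ ?_
  calc #{x ∈ S | x % b = r} ≤ #(range a) := by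
        refine card_le_card_of_injOn (· / b) (fun x hx ↦ ?_) fun x hx y hy hxy ↦ ?_
        · have hx' := mem_range.mp (hS (mem_filter.mp hx).1)
          exact mem_range.mpr (Nat.div_lt_of_lt_mul (by linarith))
        · rw [← Nat.div_add_mod x b, ← Nat.div_add_mod y b]
          simp only at hxy
          rw [hxy, (mem_filter.mp hx).2, (mem_filter.mp hy).2]
    _ = a := card_range a

theorem rho_prime_pow_le {f : ℤ[X]} (hcont : Int.gcd f.content p = 1) {e j : ℕ}
    (hej : f.natDegree * e < j) (he : e + 1 ≤ j) :
    rho f (p ^ j) ≤ f.natDegree * p ^ (j - (e + 1)) := by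
  set S := (range (p ^ j)).filter fun x : ℕ ↦ ((p ^ j : ℕ) : ℤ) ∣ f.eval (x : ℤ)
  have hsplit := card_le_mul_card_image_mod (p ^ (j - (e + 1))) (p ^ (e + 1))
    (S := S) (by rw [← pow_add, Nat.sub_add_cancel he]; exact filter_subset _ _)
  obtain ⟨T, hTS, hinj, himg⟩ := exists_subset_injOn_image_eq_of_surjOn (S : Set ℕ)
    (S.image (· % p ^ (e + 1))) (by rw [coe_image]; exact Set.surjOn_image _ _)
  have hT : #T ≤ f.natDegree := by
    refine card_le_natDegree_of_pairwise_not_dvd_sub (n := fun x : ℕ ↦ (x : ℤ)) hcont hej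
      (fun x hx ↦ by exact_mod_cast (mem_filter.mp (hTS hx)).2) fun x hx y hy hxy hdvd ↦ ?_
    refine hxy (hinj hx hy ?_)
    exact (Nat.modEq_iff_dvd.mpr (by exact_mod_cast hdvd)).symm
  calc rho f (p ^ j) = #S := rfl
    _ ≤ p ^ (j - (e + 1)) * #T := by rwa [← himg, card_image_of_injOn hinj] at hsplit
    _ ≤ f.natDegree * p ^ (j - (e + 1)) := by rw [mul_comm]; exact Nat.mul_le_mul_right _ hT

end Padic

theorem div_le_cast_pred_div_add_one (j k : ℕ) (hj : 1 ≤ j) :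
    (j : ℝ) / k ≤ ((j - 1) / k + 1 : ℕ) := by
  rcases k.eq_zero_or_pos with rfl | hk
  · simp
  · rw [div_le_iff₀ (by exact_mod_cast hk)]
    have := Nat.lt_mul_div_succ (j - 1) hk
    exact_mod_cast (show j ≤ ((j - 1) / k + 1) * k by rw [mul_comm]; omega)

theorem squarefree_values_stmt0_general (p : ℕ) (hp : p.Prime) (k : ℕ)
    (f : Polynomial ℤ) (hdeg : f.natDegree = k)
    (hcont : Int.gcd f.content p = 1)
    (j : ℕ) (hj : 1 ≤ j) :
    (rho f (p ^ j) : ℝ) ≤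
      k * min ((p : ℝ) ^ ((j : ℝ) * (1 - 1 / (k : ℝ)))) ((p : ℝ) ^ (j - 1)) := by
  have : Fact p.Prime := ⟨hp⟩
  set e := (j - 1) / k
  have hej : k * e < j := (Nat.mul_div_le (j - 1) k).trans_lt (by omega)
  have he : e + 1 ≤ j := Nat.succ_le_of_lt ((Nat.div_le_self _ _).trans_lt (by omega))
  have hcount := rho_prime_pow_le hcont (hdeg ▸ hej) he
  have hp1 : (1 : ℝ) ≤ p := by exact_mod_cast hp.one_le
  have hexp : ((j - (e + 1) : ℕ) : ℝ) ≤ j * (1 - 1 / k) := by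
    have hceil := div_le_cast_pred_div_add_one j k hj
    rw [Nat.cast_sub he, mul_one_sub, mul_one_div]
    linarith
  have hle_rpow : (p : ℝ) ^ (j - (e + 1)) ≤ (p : ℝ) ^ ((j : ℝ) * (1 - 1 / (k : ℝ))) := by
    rw [← Real.rpow_natCast]
    exact Real.rpow_le_rpow_of_exponent_le hp1 hexp
  have hle_pow : (p : ℝ) ^ (j - (e + 1)) ≤ (p : ℝ) ^ (j - 1) :=
    pow_le_pow_right₀ hp1 (Nat.sub_le_sub_left (Nat.le_add_left 1 e) j)
  calc (rho f (p ^ j) : ℝ) ≤ k * (p : ℝ) ^ (j - (e + 1)) := by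
        rw [← hdeg]; exact_mod_cast hcount
    _ ≤ _ := mul_le_mul_of_nonneg_left (le_min hle_rpow hle_pow) k.cast_nonneg

theorem squarefree_values_stmt0 (p : ℕ) (hp : p.Prime) (k : ℕ) (hk : 1 ≤ k)
    (f : Polynomial ℤ) (hdeg : f.natDegree = k)
    (hdisc : disc f ≠ 0) (hcont : Int.gcd f.content p = 1)
    (j : ℕ) (hj : 1 ≤ j) :
    (rho f (p ^ j) : ℝ) ≤
      k * min ((p : ℝ) ^ ((j : ℝ) * (1 - 1 / (k : ℝ)))) ((p : ℝ) ^ (j - 1)) :=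
  squarefree_values_stmt0_general p hp k f hdeg hcont j hj
end

section
/- Let f ∈ ℤ[X] be a polynomial of degree k ≥ 1 with nonzero discriminant and content 1. Then for every ε > 0 there is a constant C depending only on k and ε such that for all M ≥ 2, the sum ∑_{m ≤ M} ρ_f(m) ≤ C · M^{1+ε}, uniformly in f. -/
/-!
Modulo a prime p a primitive f of degree k is a nonzero polynomial, so ρ_f(p) ≤ k; every root
mod p^(e+1) reduces to a root mod p, with at most p^e roots in each fibre; and by the Chinese
remainder theorem ρ_f is submultiplicative on coprime arguments. Hence ρ_f(m) ≤ m ∏_{p ∣ m} k/p,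
so for m ≤ M we have ρ_f(m) ≤ M^(1+ε) g(m) with g(m) = m^(-ε) ∏_{p ∣ m} k/p multiplicative.
The sum of g over m ≤ M is at most the Euler product over p ≤ M, whose factors are
1 + (k/p) p^(-ε)/(1 - p^(-ε)) ≤ exp(k p^(-1-ε)/(1 - 2^(-ε))); so it is bounded by
exp(k ζ(1+ε)/(1 - 2^(-ε))), independently of f.
-/

open Polynomial

open Finset

lemma dvd_eval_iff_of_modEq {f : ℤ[X]} {m a b : ℤ} (h : a ≡ b [ZMOD m]) :
    m ∣ f.eval a ↔ m ∣ f.eval b :=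
  dvd_iff_dvd_of_dvd_sub ((Int.ModEq.dvd h.symm).trans (sub_dvd_eval_sub a b f))

lemma dvd_eval_mod_of_dvd (f : ℤ[X]) {a m n : ℕ} (ha : a ∣ m) (h : (m : ℤ) ∣ f.eval n) :
    (a : ℤ) ∣ f.eval ((n % a : ℕ) : ℤ) := by
  push_cast
  exact (dvd_eval_iff_of_modEq (Int.mod_modEq _ _)).mpr ((Int.natCast_dvd_natCast.mpr ha).trans h)

lemma map_zmod_ne_zero_of_isPrimitive {f : ℤ[X]} (hf : f.IsPrimitive) {m : ℕ} (hm : m ≠ 1) :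
    f.map (Int.castRingHom (ZMod m)) ≠ 0 := by
  intro h
  have hdvd : C (m : ℤ) ∣ f := C_dvd_iff_dvd_coeff _ _ |>.mpr fun i => by
    simpa [ZMod.intCast_zmod_eq_zero_iff_dvd] using congrArg (coeff · i) h
  exact hm (by simpa [Int.ofNat_isUnit] using hf _ hdvd)

lemma rho_prime_le_natDegree {f : ℤ[X]} (hf : f.IsPrimitive) {p : ℕ} (hp : p.Prime) :
    rho f p ≤ f.natDegree := by
  have : Fact p.Prime := ⟨hp⟩
  set g := f.map (Int.castRingHom (ZMod p))
  have hg : g ≠ 0 := map_zmod_ne_zero_of_isPrimitive hf hp.ne_one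
  calc rho f p ≤ #g.roots.toFinset := by
        refine card_le_card_of_injOn (fun n : ℕ => (n : ZMod p)) (fun n hn => ?_) ?_
        · simp only [coe_filter, mem_range, Set.mem_ofPred_eq] at hn
          simpa [hg, g, ← ZMod.intCast_zmod_eq_zero_iff_dvd] using hn.2
        · intro a ha b hb hab
          simp only [coe_filter, mem_range, Set.mem_ofPred_eq] at ha hb
          simpa [ZMod.val_cast_of_lt ha.1, ZMod.val_cast_of_lt hb.1] using congrArg ZMod.val hab
    _ ≤ g.natDegree := (Multiset.toFinset_card_le _).trans (card_roots' g)
    _ ≤ f.natDegree := natDegree_map_le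

lemma rho_mul_le_rho_left_mul (f : ℤ[X]) {a : ℕ} (ha : 0 < a) (b : ℕ) :
    rho f (a * b) ≤ rho f a * b := by
  rw [rho, rho, ← card_range b, ← card_product, card_range]
  refine card_le_card_of_injOn (fun n => (n % a, n / a)) (fun n hn => ?_) ?_
  · simp only [coe_filter, mem_range, Set.mem_ofPred_eq] at hn
    simp only [mem_coe, mem_product, mem_filter, mem_range]
    exact ⟨⟨Nat.mod_lt _ ha, dvd_eval_mod_of_dvd f (dvd_mul_right a b) hn.2⟩,
      Nat.div_lt_of_lt_mul hn.1⟩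
  · intro x _ y _ hxy
    simp only [Prod.mk.injEq] at hxy
    rw [← Nat.div_add_mod x a, ← Nat.div_add_mod y a, hxy.1, hxy.2]

lemma rho_mul_le_of_coprime (f : ℤ[X]) {a b : ℕ} (ha : 0 < a) (hb : 0 < b)
    (hab : a.Coprime b) : rho f (a * b) ≤ rho f a * rho f b := by
  rw [rho, rho, rho, ← card_product]
  refine card_le_card_of_injOn (fun n => (n % a, n % b)) (fun n hn => ?_) ?_
  · simp only [coe_filter, mem_range, Set.mem_ofPred_eq] at hn
    simp only [mem_coe, mem_product, mem_filter, mem_range]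
    exact ⟨⟨Nat.mod_lt _ ha, dvd_eval_mod_of_dvd f (dvd_mul_right a b) hn.2⟩,
      ⟨Nat.mod_lt _ hb, dvd_eval_mod_of_dvd f (dvd_mul_left b a) hn.2⟩⟩
  · intro x hx y hy hxy
    simp only [coe_filter, mem_range, Set.mem_ofPred_eq, Prod.mk.injEq] at hx hy hxy
    exact Nat.ModEq.eq_of_lt_of_lt
      ((Nat.modEq_and_modEq_iff_modEq_mul hab).mp hxy) hx.1 hy.1

lemma rho_le_mul_prod_primeFactors {f : ℤ[X]} (hf : f.IsPrimitive) (m : ℕ) :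
    (rho f m : ℝ) ≤ m * ∏ p ∈ m.primeFactors, (f.natDegree / p : ℝ) := by
  induction m using Nat.recOnPosPrimePosCoprime with
  | zero => simp [rho]
  | one => simp [rho]
  | prime_pow p n hp hn =>
    obtain ⟨e, rfl⟩ : ∃ e, n = e + 1 := ⟨n - 1, by omega⟩
    have hp0 : (p : ℝ) ≠ 0 := by exact_mod_cast hp.ne_zero
    have hbound : rho f (p ^ (e + 1)) ≤ f.natDegree * p ^ e := by
      rw [pow_succ']
      exact (rho_mul_le_rho_left_mul f hp.pos _).trans
        (Nat.mul_le_mul_right _ (rho_prime_le_natDegree hf hp))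
    rw [Nat.primeFactors_prime_pow (Nat.succ_ne_zero _) hp, prod_singleton]
    calc (rho f (p ^ (e + 1)) : ℝ) ≤ f.natDegree * p ^ e := by exact_mod_cast hbound
      _ = _ := by push_cast; field_simp; ring
  | coprime a b ha hb hab iha ihb =>
    rw [hab.primeFactors_mul, prod_union hab.disjoint_primeFactors, Nat.cast_mul]
    calc (rho f (a * b) : ℝ) ≤ rho f a * rho f b := by
          exact_mod_cast rho_mul_le_of_coprime f (by omega) (by omega) hab
      _ ≤ (a * ∏ p ∈ a.primeFactors, (f.natDegree / p : ℝ)) *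
            (b * ∏ p ∈ b.primeFactors, (f.natDegree / p : ℝ)) := by gcongr
      _ = _ := by ring

noncomputable def rhoMajorant (d : ℕ) (s : ℝ) (m : ℕ) : ℝ :=
  (∏ p ∈ m.primeFactors, (d / p : ℝ)) / (m : ℝ) ^ s

section rhoMajorant

variable (d : ℕ)

lemma rhoMajorant_nonneg (s : ℝ) (m : ℕ) : 0 ≤ rhoMajorant d s m := by
  unfold rhoMajorant
  positivity

lemma rhoMajorant_one (s : ℝ) : rhoMajorant d s 1 = 1 := by
  simp [rhoMajorant]

lemma rhoMajorant_mul (s : ℝ) {m n : ℕ} (hmn : m.Coprime n) :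
    rhoMajorant d s (m * n) = rhoMajorant d s m * rhoMajorant d s n := by
  rw [rhoMajorant, hmn.primeFactors_mul, prod_union hmn.disjoint_primeFactors, Nat.cast_mul,
    Real.mul_rpow (by positivity) (by positivity), mul_div_mul_comm]
  rfl

lemma rhoMajorant_prime_pow_succ (s : ℝ) {p : ℕ} (hp : p.Prime) (e : ℕ) :
    rhoMajorant d s (p ^ (e + 1)) = d / p * (p : ℝ) ^ (-s) * ((p : ℝ) ^ (-s)) ^ e := by
  rw [rhoMajorant, Nat.primeFactors_prime_pow (Nat.succ_ne_zero e) hp, prod_singleton,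
    Nat.cast_pow, ← Real.rpow_pow_comm (by positivity), Real.rpow_neg (by positivity)]
  ring

lemma hasSum_rhoMajorant_prime_pow {s : ℝ} (hs : 0 < s) {p : ℕ} (hp : p.Prime) :
    HasSum (fun e => rhoMajorant d s (p ^ e))
      (1 + d / p * (p : ℝ) ^ (-s) * (1 - (p : ℝ) ^ (-s))⁻¹) := by
  have hr1 : (p : ℝ) ^ (-s) < 1 :=
    Real.rpow_lt_one_of_one_lt_of_neg (by exact_mod_cast hp.one_lt) (by linarith)
  have hgeom := (hasSum_geometric_of_lt_one (by positivity) hr1).mul_left (d / p * (p : ℝ) ^ (-s))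
  have hshift : HasSum (fun e => rhoMajorant d s (p ^ (e + 1)))
      (d / p * (p : ℝ) ^ (-s) * (1 - (p : ℝ) ^ (-s))⁻¹) := by
    simpa only [rhoMajorant_prime_pow_succ d s hp] using hgeom
  simpa only [pow_zero, rhoMajorant_one] using
    HasSum.zero_add (f := fun e => rhoMajorant d s (p ^ e)) hshift

lemma tsum_rhoMajorant_prime_pow_le {s : ℝ} (hs : 0 < s) {p : ℕ} (hp : p.Prime) :
    ∑' e, rhoMajorant d s (p ^ e) ≤ 1 + d * (1 - 2 ^ (-s))⁻¹ * (p : ℝ) ^ (-(1 + s)) := by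
  rw [(hasSum_rhoMajorant_prime_pow d hs hp).tsum_eq]
  have hp0 : (0 : ℝ) < p := by exact_mod_cast hp.pos
  have hr2 : (p : ℝ) ^ (-s) ≤ 2 ^ (-s) :=
    Real.rpow_le_rpow_of_nonpos (by norm_num) (by exact_mod_cast hp.two_le) (by linarith)
  have h2 : (2 : ℝ) ^ (-s) < 1 := Real.rpow_lt_one_of_one_lt_of_neg (by norm_num) (by linarith)
  rw [neg_add, Real.rpow_add hp0, Real.rpow_neg_one]
  gcongr 1 + ?_
  calc (d / p : ℝ) * (p : ℝ) ^ (-s) * (1 - (p : ℝ) ^ (-s))⁻¹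
      ≤ d / p * (p : ℝ) ^ (-s) * (1 - 2 ^ (-s))⁻¹ := by gcongr
    _ = _ := by ring

end rhoMajorant

lemma sum_Icc_le_prod_primesBelow_tsum {f : ℕ → ℝ} (hf₁ : f 1 = 1)
    (hmul : ∀ {m n}, m.Coprime n → f (m * n) = f m * f n) (hf : ∀ n, 0 ≤ f n)
    (hsum : ∀ {p}, p.Prime → Summable (fun e => f (p ^ e))) (M : ℕ) :
    ∑ m ∈ Icc 1 M, f m ≤ ∏ p ∈ (M + 1).primesBelow, ∑' e, f (p ^ e) := by
  have hprod := (EulerProduct.summable_and_hasSum_smoothNumbers_prod_primesBelow_tsum hf₁ hmul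
    (fun hp => by simpa only [Real.norm_of_nonneg (hf _)] using hsum hp) (M + 1)).2
  have hsmooth : ∀ m ∈ Icc 1 M, m ∈ (M + 1).smoothNumbers := fun m hm =>
    Nat.mem_smoothNumbers_of_lt (mem_Icc.mp hm).1 (Nat.lt_succ_of_le (mem_Icc.mp hm).2)
  rw [← sum_subtype_of_mem f hsmooth]
  exact sum_le_hasSum _ (fun m _ => hf m) hprod

lemma sum_rhoMajorant_le (d : ℕ) {s : ℝ} (hs : 0 < s) (M : ℕ) :
    ∑ m ∈ Icc 1 M, rhoMajorant d s m ≤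
      Real.exp (d * (1 - 2 ^ (-s))⁻¹ * ∑' n : ℕ, (n : ℝ) ^ (-(1 + s))) := by
  set c : ℝ := d * (1 - 2 ^ (-s))⁻¹
  have hc : 0 ≤ c := mul_nonneg d.cast_nonneg (inv_nonneg.mpr (sub_nonneg.mpr
    (Real.rpow_le_one_of_one_le_of_nonpos (by norm_num) (by linarith))))
  calc ∑ m ∈ Icc 1 M, rhoMajorant d s m
      ≤ ∏ p ∈ (M + 1).primesBelow, ∑' e, rhoMajorant d s (p ^ e) :=
        sum_Icc_le_prod_primesBelow_tsum (rhoMajorant_one d s) (rhoMajorant_mul d s)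
          (rhoMajorant_nonneg d s) (fun hp => (hasSum_rhoMajorant_prime_pow d hs hp).summable) M
    _ ≤ ∏ p ∈ (M + 1).primesBelow, Real.exp (c * (p : ℝ) ^ (-(1 + s))) := by
        refine prod_le_prod (fun p _ => tsum_nonneg fun e => rhoMajorant_nonneg d s _)
          fun p hp => (tsum_rhoMajorant_prime_pow_le d hs (Nat.prime_of_mem_primesBelow hp)).trans
            ((add_comm _ _).le.trans (Real.add_one_le_exp _))
    _ = Real.exp (c * ∑ p ∈ (M + 1).primesBelow, (p : ℝ) ^ (-(1 + s))) := by
        rw [← Real.exp_sum, mul_sum]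
    _ ≤ Real.exp (c * ∑' n : ℕ, (n : ℝ) ^ (-(1 + s))) := by
        gcongr
        exact Summable.sum_le_tsum _ (fun n _ => by positivity)
          (Real.summable_nat_rpow.mpr (by linarith))

lemma rho_le_rpow_mul_rhoMajorant {f : ℤ[X]} (hf : f.IsPrimitive) {m : ℕ} (hm : m ≠ 0) (s : ℝ) :
    (rho f m : ℝ) ≤ (m : ℝ) ^ (1 + s) * rhoMajorant f.natDegree s m := by
  have hm0 : (0 : ℝ) < m := by exact_mod_cast Nat.pos_of_ne_zero hm
  rw [rhoMajorant, Real.rpow_add hm0, Real.rpow_one, mul_assoc, mul_div_assoc',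
    mul_div_cancel_left₀ _ (Real.rpow_pos_of_pos hm0 s).ne']
  exact rho_le_mul_prod_primeFactors hf m

theorem squarefree_values_stmt3_general (k : ℕ) (ε : ℝ) (hε : 0 < ε) :
    ∃ C > 0, ∀ f : Polynomial ℤ, f.natDegree = k → disc f ≠ 0 → f.content = 1 →
      ∀ M : ℕ, 2 ≤ M →
        (∑ m ∈ Finset.Icc 1 M, (rho f m : ℝ)) ≤ C * (M : ℝ) ^ ((1 : ℝ) + ε) := by
  set C := Real.exp (k * (1 - 2 ^ (-ε))⁻¹ * ∑' n : ℕ, (n : ℝ) ^ (-(1 + ε)))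
  refine ⟨C, Real.exp_pos _, fun f hdeg _ hcont M _ => ?_⟩
  have hf : f.IsPrimitive := isPrimitive_iff_content_eq_one.mpr hcont
  calc ∑ m ∈ Icc 1 M, (rho f m : ℝ)
      ≤ ∑ m ∈ Icc 1 M, (M : ℝ) ^ (1 + ε) * rhoMajorant k ε m := by
        refine sum_le_sum fun m hm => ?_
        obtain ⟨hm1, hmM⟩ := mem_Icc.mp hm
        rw [← hdeg]
        grw [rho_le_rpow_mul_rhoMajorant hf (by omega) ε, hmM]
        exact rhoMajorant_nonneg _ _ _
    _ ≤ (M : ℝ) ^ (1 + ε) * C := by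
        rw [← mul_sum]
        gcongr
        exact sum_rhoMajorant_le k hε M
    _ = _ := mul_comm _ _

theorem squarefree_values_stmt3 (k : ℕ) (hk : 1 ≤ k) (ε : ℝ) (hε : 0 < ε) :
    ∃ C > 0, ∀ f : Polynomial ℤ, f.natDegree = k → disc f ≠ 0 → f.content = 1 →
      ∀ M : ℕ, 2 ≤ M →
        (∑ m ∈ Finset.Icc 1 M, (rho f m : ℝ)) ≤ C * (M : ℝ) ^ ((1 : ℝ) + ε) :=
  squarefree_values_stmt3_general k ε hε
end

section
/- Let k ≥ 1 be fixed and let t ≥ 1. The number of nonzero vectors c = (c₀,…,c_k) ∈ ℤ^{k+1} with Euclidean norm at most t for which the polynomial f_c(X) = c₀ + c₁X + ⋯ + c_k X^k is reducible over ℤ (or has degree less than k) is at most t^{k+o(1)} as t → ∞. -/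
/-!
A polynomial of degree `< k` has vanishing top coefficient, so there are `O(t^k)` of them. A
reducible `f` of degree `k` factors over `ℤ` (Gauss) as `f = g h` with `deg g, deg h < k`. Pick `k`
integers `x_i ∈ [-k, k]` with `f(x_i) ≠ 0`: then `g` and `h` are determined by their values at the
`x_i`, and each pair `(g(x_i), h(x_i))` is a lattice point of the hyperbola `0 < |a b| ≤ N` with
`N ≍ t`, which has `O(N log N)` of them. Hence there are `O((t log t)^k) = O(t^(k+ε))` such `f`.
-/

open Polynomial Finset

namespace Polynomial

theorem sum_C_mul_X_pow_eq_ofFn {R : Type*} [Semiring R] [DecidableEq R] (n : ℕ)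
    (v : Fin n → R) : ∑ i : Fin n, C (v i) * X ^ (i : ℕ) = ofFn n v := by
  simp only [ofFn_eq_sum_monomial, C_mul_X_pow_eq_monomial]

theorem abs_eval_ofFn_le {R : Type*} [CommRing R] [LinearOrder R] [IsStrictOrderedRing R]
    [DecidableEq R] {n : ℕ} (v : Fin n → R) {x B X : R} (hv : ∀ i, |v i| ≤ B) (hx : |x| ≤ X)
    (hX : 1 ≤ X) : |(ofFn n v).eval x| ≤ n * X ^ n * B := by
  have hterm : ∀ i : Fin n, |v i * x ^ (i : ℕ)| ≤ B * X ^ n := fun i => by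
    rw [abs_mul, abs_pow]
    exact mul_le_mul (hv i)
      ((pow_le_pow_left₀ (abs_nonneg x) hx _).trans (pow_le_pow_right₀ hX i.isLt.le))
      (by positivity) ((abs_nonneg _).trans (hv i))
  simp only [ofFn_eq_sum_monomial, eval_finsetSum, eval_monomial]
  calc |∑ i : Fin n, v i * x ^ (i : ℕ)| ≤ ∑ i : Fin n, |v i * x ^ (i : ℕ)| :=
        abs_sum_le_sum_abs _ _
    _ ≤ ∑ _i : Fin n, B * X ^ n := sum_le_sum fun i _ => hterm i
    _ = n * X ^ n * B := by
        rw [sum_const, card_univ, Fintype.card_fin, nsmul_eq_mul]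
        ring

theorem eq_of_natDegree_lt_of_eval_eq {R : Type*} [CommRing R] [IsDomain R] {n : ℕ}
    {f g : R[X]} (v : Fin n → R) (hv : Function.Injective v) (hf : f.natDegree < n)
    (hg : g.natDegree < n) (hfg : ∀ i, f.eval (v i) = g.eval (v i)) : f = g := by
  have hdeg : ∀ p : R[X], p.natDegree < n → p.degree < #(univ : Finset (Fin n)) := fun p hp => by
    rw [card_univ, Fintype.card_fin]
    exact degree_le_natDegree.trans_lt (by exact_mod_cast hp)
  exact eq_of_degrees_lt_of_eval_index_eq univ hv.injOn (hdeg f hf) (hdeg g hg)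
    fun i _ => hfg i

theorem exists_embedding_eval_ne_zero {R : Type*} [CommRing R] [IsDomain R] [DecidableEq R]
    {f : R[X]} (hf : f ≠ 0) {n : ℕ} (s : Finset R) (hs : f.natDegree + n ≤ #s) :
    ∃ e : Fin n ↪ R, ∀ i, e i ∈ s ∧ f.eval (e i) ≠ 0 := by
  have hroots : #{x ∈ s | f.IsRoot x} ≤ f.natDegree :=
    calc #{x ∈ s | f.IsRoot x} ≤ #f.roots.toFinset :=
          card_le_card fun x hx => by
            rw [mem_filter] at hx
            simpa [mem_roots hf] using hx.2
      _ ≤ f.natDegree := f.roots.toFinset_card_le.trans f.card_roots'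
  have hgood : n ≤ #{x ∈ s | ¬ f.IsRoot x} := by
    have := card_filter_add_card_filter_not (s := s) (fun x => f.IsRoot x)
    omega
  obtain ⟨t, hts, htn⟩ := exists_subset_card_eq hgood
  refine ⟨(t.equivFin.trans (finCongr htn)).symm.toEmbedding.trans (.subtype _), fun i => ?_⟩
  simpa using mem_filter.mp (hts (Subtype.prop _))

theorem IsPrimitive.natDegree_pos_of_dvd {R : Type*} [CommSemiring R] {p q : R[X]}
    (hp : p.IsPrimitive) (hq : q ∣ p) (hu : ¬ IsUnit q) : 0 < q.natDegree := by
  by_contra! h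
  obtain ⟨r, rfl⟩ := natDegree_eq_zero.mp (Nat.le_zero.mp h)
  exact hu (isUnit_C.mpr (hp r hq))

theorem exists_eq_mul_natDegree_lt_of_not_irreducible_map {f : ℤ[X]} (hf : 0 < f.natDegree)
    (hirr : ¬ Irreducible (f.map (Int.castRingHom ℚ))) :
    ∃ g h : ℤ[X], f = g * h ∧ g.natDegree < f.natDegree ∧ h.natDegree < f.natDegree := by
  have hcont : f.content ≠ 0 := by
    rw [Ne, content_eq_zero_iff]
    rintro rfl
    simp at hf
  have hprim := f.isPrimitive_primPart
  have hdeg := f.natDegree_primPart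
  have hnirr : ¬ Irreducible f.primPart := by
    rw [IsPrimitive.Int.irreducible_iff_irreducible_map_cast hprim]
    refine fun hq => hirr ?_
    rw [f.eq_C_content_mul_primPart, Polynomial.map_mul, map_C]
    exact (irreducible_isUnit_mul (isUnit_C.mpr (by simpa using hcont))).mpr hq
  have hnu : ¬ IsUnit f.primPart := fun hu => by
    have := natDegree_eq_zero_of_isUnit hu
    omega
  obtain ⟨a, b, hab, ha, hb⟩ : ∃ a b, f.primPart = a * b ∧ ¬ IsUnit a ∧ ¬ IsUnit b := by
    simpa [irreducible_iff, hnu] using hnirr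
  have ha0 : a ≠ 0 := by rintro rfl; exact hprim.ne_zero (by simp [hab])
  have hb0 : b ≠ 0 := by rintro rfl; exact hprim.ne_zero (by simp [hab])
  have hsum : a.natDegree + b.natDegree = f.natDegree := by
    rw [← natDegree_mul ha0 hb0, ← hab, hdeg]
  have hapos := hprim.natDegree_pos_of_dvd (Dvd.intro b hab.symm) ha
  have hbpos := hprim.natDegree_pos_of_dvd (Dvd.intro_left a hab.symm) hb
  refine ⟨C f.content * a, b, ?_, ?_, by omega⟩
  · rw [mul_assoc, ← hab, ← eq_C_content_mul_primPart]
  · rw [natDegree_C_mul hcont]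
    omega

end Polynomial

noncomputable def hyperbolaPoints (N : ℕ) : Finset (ℤ × ℤ) :=
  {p ∈ Icc (-N : ℤ) N ×ˢ Icc (-N : ℤ) N | p.1 * p.2 ≠ 0 ∧ |p.1 * p.2| ≤ N}

theorem mem_hyperbolaPoints {N : ℕ} {p : ℤ × ℤ} :
    p ∈ hyperbolaPoints N ↔ p.1 * p.2 ≠ 0 ∧ |p.1 * p.2| ≤ N := by
  refine ⟨fun hp => (mem_filter.mp hp).2, fun ⟨hne, hle⟩ => mem_filter.mpr ⟨?_, hne, hle⟩⟩
  obtain ⟨h1, h2⟩ := mul_ne_zero_iff.mp hne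
  rw [abs_mul] at hle
  have := Int.one_le_abs h1
  have := Int.one_le_abs h2
  simp only [mem_product, mem_Icc, ← abs_le]
  constructor <;> nlinarith [abs_nonneg p.1, abs_nonneg p.2]

/-- Counting by `j = |a|`: at most `∑_{j ≤ N} 2 (2 ⌊N/j⌋ + 1) ≤ 6 N H_N` points. -/
theorem card_hyperbolaPoints_le (N : ℕ) :
    (#(hyperbolaPoints N) : ℝ) ≤ 6 * N * (1 + Real.log N) := by
  let fiber (j : ℕ) : Finset (ℤ × ℤ) := {(j : ℤ), -(j : ℤ)} ×ˢ Icc (-(N / j : ℕ) : ℤ) (N / j : ℕ)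
  have hsub : hyperbolaPoints N ⊆ (Icc 1 N).biUnion fiber := by
    intro p hp
    obtain ⟨hne, hle⟩ := mem_hyperbolaPoints.mp hp
    rw [Int.abs_eq_natAbs, Int.natAbs_mul] at hle
    have hle' : p.1.natAbs * p.2.natAbs ≤ N := by exact_mod_cast hle
    obtain ⟨h1, h2⟩ := mul_ne_zero_iff.mp hne
    have h1' : 1 ≤ p.1.natAbs := Int.natAbs_pos.mpr h1
    have h2' : 1 ≤ p.2.natAbs := Int.natAbs_pos.mpr h2
    refine mem_biUnion.mpr ⟨p.1.natAbs, mem_Icc.mpr ⟨h1', by nlinarith⟩, mem_product.mpr ⟨?_, ?_⟩⟩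
    · simpa only [mem_insert, mem_singleton] using Int.natAbs_eq p.1
    · have : p.2.natAbs ≤ N / p.1.natAbs := (Nat.le_div_iff_mul_le h1').mpr (by linarith)
      rw [mem_Icc, ← abs_le, Int.abs_eq_natAbs]
      exact_mod_cast this
  have hfiber : ∀ j ∈ Icc 1 N, (#(fiber j) : ℝ) ≤ 6 * N * (j : ℝ)⁻¹ := fun j hj => by
    have hj := mem_Icc.mp hj
    have hj0 : (0 : ℝ) < j := by exact_mod_cast hj.1
    have hfloor : ((N / j : ℕ) : ℝ) ≤ N / j := Nat.cast_div_le
    have hone : (1 : ℝ) ≤ N / j := by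
      rw [one_le_div hj0]
      exact_mod_cast hj.2
    have hcard : #(Icc (-(N / j : ℕ) : ℤ) (N / j : ℕ)) = 2 * (N / j) + 1 := by
      rw [Int.card_Icc]
      omega
    calc (#(fiber j) : ℝ) ≤ 2 * (2 * ((N / j : ℕ) : ℝ) + 1) := by
          rw [card_product, hcard]
          push_cast
          gcongr
          exact_mod_cast card_le_two
      _ ≤ 6 * N * (j : ℝ)⁻¹ := by
          rw [← div_eq_mul_inv, mul_div_assoc]
          linarith
  calc (#(hyperbolaPoints N) : ℝ) ≤ ∑ j ∈ Icc 1 N, 6 * N * (j : ℝ)⁻¹ := by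
        refine le_trans ?_ (sum_le_sum hfiber)
        exact_mod_cast (card_le_card hsub).trans card_biUnion_le
    _ = 6 * N * harmonic N := by
        rw [← mul_sum, harmonic_eq_sum_Icc]
        push_cast
        rfl
    _ ≤ 6 * N * (1 + Real.log N) := by
        gcongr
        exact harmonic_le_one_add_log N

theorem pow_mul_one_add_log_le {k : ℕ} (hk : k ≠ 0) {ε : ℝ} (hε : 0 < ε) {x : ℝ} (hx : 1 ≤ x) :
    (x * (1 + Real.log x)) ^ k ≤ (1 + k / ε) ^ k * x ^ ((k : ℝ) + ε) := by
  have hk0 : (0 : ℝ) < k := by exact_mod_cast Nat.pos_of_ne_zero hk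
  have hδ : 0 < ε / k := div_pos hε hk0
  have hlog : 1 + Real.log x ≤ (1 + k / ε) * x ^ (ε / k) := by
    have h1 : 1 ≤ x ^ (ε / k) := Real.one_le_rpow hx hδ.le
    have h2 : Real.log x ≤ k / ε * x ^ (ε / k) :=
      calc Real.log x ≤ x ^ (ε / k) / (ε / k) := Real.log_le_rpow_div (by linarith) hδ
        _ = k / ε * x ^ (ε / k) := by field_simp
    linarith [mul_le_mul_of_nonneg_left h1 (by positivity : (0 : ℝ) ≤ k / ε)]
  calc (x * (1 + Real.log x)) ^ k ≤ (x * ((1 + k / ε) * x ^ (ε / k))) ^ k := by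
        have := Real.log_nonneg hx
        gcongr
    _ = (1 + k / ε) ^ k * (x ^ k * (x ^ (ε / k)) ^ k) := by rw [mul_pow, mul_pow]; ring
    _ = (1 + k / ε) ^ k * x ^ ((k : ℝ) + ε) := by
        rw [← Real.rpow_mul_natCast (by linarith), div_mul_cancel₀ _ hk0.ne',
          Real.rpow_add (by linarith), Real.rpow_natCast]

theorem abs_le_floor_of_sum_sq_le {ι : Type*} [Fintype ι] {c : ι → ℤ} {t : ℝ} (ht : 0 ≤ t)
    (h : ∑ i, (c i : ℝ) ^ 2 ≤ t ^ 2) (i : ι) : |c i| ≤ ⌊t⌋₊ := by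
  have hi : (c i : ℝ) ^ 2 ≤ t ^ 2 :=
    (single_le_sum (f := fun i => (c i : ℝ) ^ 2) (fun _ _ => sq_nonneg _) (mem_univ i)).trans h
  rw [Int.abs_eq_natAbs]
  exact_mod_cast Nat.le_floor (by simpa [Nat.cast_natAbs] using abs_le_of_sq_le_sq hi ht)

theorem finite_setOf_forall_abs_le {ι : Type*} [Fintype ι] [DecidableEq ι] (m : ℤ) :
    {c : ι → ℤ | ∀ i, |c i| ≤ m}.Finite :=
  (Set.finite_Icc (-fun _ => m) fun _ => m).subset fun _ hc =>
    ⟨fun i => (abs_le.mp (hc i)).1, fun i => (abs_le.mp (hc i)).2⟩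

theorem Set.ncard_le_card_of_exists_witness {α β : Type*} {S : Set α} (T : Finset β)
    (R : α → β → Prop) (hex : ∀ a ∈ S, ∃ b ∈ T, R a b)
    (huniq : ∀ a ∈ S, ∀ a' ∈ S, ∀ b, R a b → R a' b → a = a') : S.ncard ≤ #T := by
  obtain rfl | ⟨a₀, ha₀⟩ := S.eq_empty_or_nonempty
  · simp
  have : Nonempty β := ⟨(hex a₀ ha₀).choose⟩
  choose! f hfT hfR using hex
  rw [← Set.ncard_coe_finset T]
  exact Set.ncard_le_ncard_of_injOn f hfT
    (fun a ha a' ha' h => huniq a ha a' ha' _ (hfR a ha) (h ▸ hfR a' ha')) T.finite_toSet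

theorem ncard_natDegree_ofFn_lt_le (k m : ℕ) :
    {c : Fin (k + 1) → ℤ | (∀ i, |c i| ≤ m) ∧ (ofFn (k + 1) c).natDegree < k}.ncard ≤
      (2 * m + 1) ^ k := by
  have hlast : ∀ c : Fin (k + 1) → ℤ, (ofFn (k + 1) c).natDegree < k → c (Fin.last k) = 0 :=
    fun c hc => by
      rw [Fin.last, ← ofFn_coeff_eq_val_of_lt c (Nat.lt_succ_self k)]
      exact coeff_eq_zero_of_natDegree_lt hc
  calc _ ≤ #(Fintype.piFinset fun _ : Fin k => Icc (-m : ℤ) m) := by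
        rw [← Set.ncard_coe_finset]
        refine Set.ncard_le_ncard_of_injOn (fun c => c ∘ Fin.castSucc) ?_ ?_ (finite_toSet _)
        · intro c hc
          rw [Finset.mem_coe, Fintype.mem_piFinset]
          exact fun i => mem_Icc.mpr (abs_le.mp (hc.1 i.castSucc))
        · intro c hc c' hc' h
          funext i
          refine Fin.lastCases ?_ (fun j => congrFun h j) i
          rw [hlast c hc.2, hlast c' hc'.2]
    _ = (2 * m + 1) ^ k := by
        simp only [Fintype.card_piFinset, Int.card_Icc, prod_const, card_univ, Fintype.card_fin]
        congr 1
        omega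

theorem ncard_natDegree_ofFn_lt_le_rpow (k : ℕ) {ε : ℝ} (hε : 0 ≤ ε) {t : ℝ} (ht : 1 ≤ t) :
    ({c : Fin (k + 1) → ℤ | (∀ i, |c i| ≤ ⌊t⌋₊) ∧ (ofFn (k + 1) c).natDegree < k}.ncard : ℝ) ≤
      3 ^ k * t ^ ((k : ℝ) + ε) :=
  calc _ ≤ (2 * ⌊t⌋₊ + 1 : ℝ) ^ k := by exact_mod_cast ncard_natDegree_ofFn_lt_le k _
    _ ≤ 3 ^ k * t ^ k := by
      rw [← mul_pow]
      gcongr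
      linarith [Nat.floor_le (by linarith : 0 ≤ t)]
    _ ≤ 3 ^ k * t ^ ((k : ℝ) + ε) := by
      gcongr
      rw [← Real.rpow_natCast]
      exact Real.rpow_le_rpow_of_exponent_le ht (by linarith)

theorem ncard_not_irreducible_map_ofFn_le {k : ℕ} (hk : k ≠ 0) (m : ℕ) :
    {c : Fin (k + 1) → ℤ | (∀ i, |c i| ≤ m) ∧ k ≤ (ofFn (k + 1) c).natDegree ∧
      ¬ Irreducible ((ofFn (k + 1) c).map (Int.castRingHom ℚ))}.ncard ≤
    ((2 * k + 1) * #(hyperbolaPoints ((k + 1) * k ^ (k + 1) * m))) ^ k := by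
  set N := (k + 1) * k ^ (k + 1) * m
  calc _ ≤ #(Fintype.piFinset fun _ : Fin k => Icc (-k : ℤ) k ×ˢ hyperbolaPoints N) := by
        refine Set.ncard_le_card_of_exists_witness _ (fun c y => ∃ g h : ℤ[X],
          ofFn (k + 1) c = g * h ∧ g.natDegree < k ∧ h.natDegree < k ∧
          Function.Injective (fun i => (y i).1) ∧
          ∀ i, (y i).2 = (g.eval (y i).1, h.eval (y i).1)) ?_ ?_
        · rintro c ⟨hbox, hdeg, hirr⟩
          have hdeg' : (ofFn (k + 1) c).natDegree = k :=
            le_antisymm (Nat.lt_succ_iff.mp (ofFn_natDegree_lt (by omega) c)) hdeg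
          have hf0 : ofFn (k + 1) c ≠ 0 := fun h0 => by
            rw [h0, natDegree_zero] at hdeg'
            omega
          obtain ⟨g, h, hf, hg, hh⟩ :=
            exists_eq_mul_natDegree_lt_of_not_irreducible_map (by omega) hirr
          obtain ⟨e, he⟩ := exists_embedding_eval_ne_zero hf0 (n := k) (Icc (-k : ℤ) k)
            (by rw [Int.card_Icc]; omega)
          refine ⟨fun i => (e i, g.eval (e i), h.eval (e i)), ?_,
            g, h, hf, hdeg' ▸ hg, hdeg' ▸ hh, e.injective, fun i => rfl⟩
          refine Fintype.mem_piFinset.mpr fun i => mem_product.mpr ⟨(he i).1, ?_⟩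
          rw [mem_hyperbolaPoints, ← eval_mul, ← hf]
          refine ⟨(he i).2, ?_⟩
          have := abs_eval_ofFn_le c hbox (abs_le.mpr (mem_Icc.mp (he i).1))
            (by exact_mod_cast Nat.one_le_iff_ne_zero.mpr hk)
          simpa [N] using this
        · rintro c - c' - y ⟨g, h, hf, hg, hh, hinj, hy⟩ ⟨g', h', hf', hg', hh', -, hy'⟩
          have hval := fun i => (hy i).symm.trans (hy' i)
          have hgg : g = g' := eq_of_natDegree_lt_of_eval_eq _ hinj hg hg' fun i =>
            congrArg Prod.fst (hval i)
          have hhh : h = h' := eq_of_natDegree_lt_of_eval_eq _ hinj hh hh' fun i =>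
            congrArg Prod.snd (hval i)
          exact injective_ofFn _ (by rw [hf, hf', hgg, hhh])
    _ = _ := by
        simp only [Fintype.card_piFinset, card_product, Int.card_Icc, prod_const, card_univ,
          Fintype.card_fin]
        congr 2
        omega

theorem ncard_not_irreducible_map_ofFn_le_rpow {k : ℕ} (hk : k ≠ 0) {ε : ℝ} (hε : 0 < ε) {t : ℝ}
    (ht : 1 ≤ t) :
    ({c : Fin (k + 1) → ℤ | (∀ i, |c i| ≤ ⌊t⌋₊) ∧ k ≤ (ofFn (k + 1) c).natDegree ∧
      ¬ Irreducible ((ofFn (k + 1) c).map (Int.castRingHom ℚ))}.ncard : ℝ) ≤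
    (6 * (2 * k + 1) * (1 + k / ε)) ^ k * ((k + 1) * k ^ (k + 1) * t) ^ ((k : ℝ) + ε) := by
  set N := (k + 1) * k ^ (k + 1) * ⌊t⌋₊
  have hN : (1 : ℝ) ≤ N := by
    have := (Nat.one_le_floor_iff t).mpr ht
    exact_mod_cast Nat.one_le_iff_ne_zero.mpr (by positivity)
  calc _ ≤ ((2 * k + 1) * #(hyperbolaPoints N) : ℝ) ^ k := by
        exact_mod_cast ncard_not_irreducible_map_ofFn_le hk _
    _ ≤ ((2 * k + 1) * (6 * N * (1 + Real.log N))) ^ k := by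
        gcongr
        exact card_hyperbolaPoints_le N
    _ = (6 * (2 * k + 1)) ^ k * (N * (1 + Real.log N)) ^ k := by
        rw [← mul_pow]
        ring_nf
    _ ≤ (6 * (2 * k + 1)) ^ k * ((1 + k / ε) ^ k * (N : ℝ) ^ ((k : ℝ) + ε)) := by
        gcongr
        exact pow_mul_one_add_log_le hk hε hN
    _ = (6 * (2 * k + 1) * (1 + k / ε)) ^ k * (N : ℝ) ^ ((k : ℝ) + ε) := by
        rw [mul_pow (6 * (2 * (k : ℝ) + 1))]
        ring
    _ ≤ _ := by
        unfold N
        push_cast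
        gcongr
        exact Nat.floor_le (by linarith)

theorem squarefree_values_stmt10 (k : ℕ) (hk : 1 ≤ k) (ε : ℝ) (hε : 0 < ε) :
    ∃ C > 0, ∀ t : ℝ, 1 ≤ t →
      (Set.ncard {c : Fin (k + 1) → ℤ | c ≠ 0 ∧ (∑ i, ((c i : ℝ)) ^ 2) ≤ t ^ 2 ∧
        ((∑ i : Fin (k + 1), Polynomial.C (c i) * Polynomial.X ^ (i : ℕ)).natDegree < k ∨
          ¬ Irreducible ((∑ i : Fin (k + 1), Polynomial.C (c i) * Polynomial.X ^ (i : ℕ)).map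
            (Int.castRingHom ℚ)))} : ℝ) ≤ C * t ^ ((k : ℝ) + ε) := by
  set M : ℝ := (k + 1) * k ^ (k + 1)
  refine ⟨3 ^ k + (6 * (2 * k + 1) * (1 + k / ε)) ^ k * M ^ ((k : ℝ) + ε), by positivity,
    fun t ht => ?_⟩
  set A := {c : Fin (k + 1) → ℤ | (∀ i, |c i| ≤ ⌊t⌋₊) ∧ (ofFn (k + 1) c).natDegree < k}
  set B := {c : Fin (k + 1) → ℤ | (∀ i, |c i| ≤ ⌊t⌋₊) ∧ k ≤ (ofFn (k + 1) c).natDegree ∧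
      ¬ Irreducible ((ofFn (k + 1) c).map (Int.castRingHom ℚ))}
  have hfin : (A ∪ B).Finite :=
    (finite_setOf_forall_abs_le _).subset fun c hc => hc.elim (·.1) (·.1)
  calc _ ≤ ((A ∪ B).ncard : ℝ) := by
        refine Nat.cast_le.mpr (Set.ncard_le_ncard (fun c ⟨_, hc, hred⟩ => ?_) hfin)
        have hbox : ∀ i, |c i| ≤ ⌊t⌋₊ := abs_le_floor_of_sum_sq_le (by linarith) hc
        rw [sum_C_mul_X_pow_eq_ofFn] at hred
        by_cases hdeg : (ofFn (k + 1) c).natDegree < k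
        · exact Or.inl ⟨hbox, hdeg⟩
        · exact Or.inr ⟨hbox, not_lt.mp hdeg, hred.resolve_left hdeg⟩
    _ ≤ A.ncard + B.ncard := by exact_mod_cast Set.ncard_union_le A B
    _ ≤ 3 ^ k * t ^ ((k : ℝ) + ε) +
        (6 * (2 * k + 1) * (1 + k / ε)) ^ k * (M * t) ^ ((k : ℝ) + ε) :=
      add_le_add (ncard_natDegree_ofFn_lt_le_rpow k hε.le ht)
        (ncard_not_irreducible_map_ofFn_le_rpow (by omega) hε ht)
    _ = _ := by
        rw [Real.mul_rpow (by positivity) (by linarith)]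
        ring
end
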